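/- arXiv:2305.19277 — 2 statements merged into one kernel-verified Lean document; each statement's English description precedes it below -/
import Mathlib

section
/- Let G be a finite simple graph and S ⊆ V(G). Then every simplicial vertex of G belonging to the monophonic convex hull ⟨S⟩ belongs to S. -/
open SimpleGraph

variable {V : Type*}

/-- The closed neighborhood of a vertex. -/
def closedNbhd (G : SimpleGraph V) (v : V) : Set V := insert v (G.neighborSet v)

/-- A vertex is simplicial if its closed neighborhood induces a complete graph. -/
def IsSimplicial (G : SimpleGraph V) (v : V) : Prop :=
  ∀ a ∈ closedNbhd G v, ∀ b ∈ closedNbhd G v, a ≠ b → G.Adj a b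

/-- `Z`, the set of simplicial vertices of `G`. -/
def simplicialSet (G : SimpleGraph V) : Set V := {v | IsSimplicial G v}

/-- `N(T)`, the union of open neighborhoods of vertices of `T`. -/
def nbhdSet (G : SimpleGraph V) (T : Set V) : Set V := ⋃ v ∈ T, G.neighborSet v

/-- An independent set of vertices. -/
def IsIndepSet' (G : SimpleGraph V) (T : Set V) : Prop :=
  ∀ u ∈ T, ∀ v ∈ T, ¬ G.Adj u v

/-- The difference `d(T) = |T| - |N(T)|` of a set of vertices. -/
noncomputable def indepDiff (G : SimpleGraph V) (T : Set V) : ℤ :=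
  (T.ncard : ℤ) - ((nbhdSet G T).ncard : ℤ)

/-- The critical independence difference `d_c(G)`. -/
noncomputable def critIndepDiff (G : SimpleGraph V) : ℤ :=
  sSup {d : ℤ | ∃ T : Set V, IsIndepSet' G T ∧ d = indepDiff G T}

/-- A walk is an induced path if it is a path and no two non-consecutive vertices
of it are adjacent. -/
def IsInducedPath (G : SimpleGraph V) {a b : V} (p : G.Walk a b) : Prop :=
  p.IsPath ∧ ∀ (i j : ℕ) (hi : i < p.support.length) (hj : j < p.support.length),
    i + 1 < j → ¬ G.Adj (p.support.get ⟨i, hi⟩) (p.support.get ⟨j, hj⟩)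

/-- A set is monophonically convex if it contains every vertex of every induced path
joining two of its vertices. -/
def MonoConvex (G : SimpleGraph V) (S : Set V) : Prop :=
  ∀ ⦃a b : V⦄, a ∈ S → b ∈ S → ∀ p : G.Walk a b, IsInducedPath G p →
    ∀ w ∈ p.support, w ∈ S

/-- The monophonic convex hull of `S`: the smallest monophonically convex set containing `S`. -/
def monoHull (G : SimpleGraph V) (S : Set V) : Set V :=
  ⋂₀ {T : Set V | S ⊆ T ∧ MonoConvex G T}

/-- A set is monophonically convexly independent if no member is in the hull
of the others. -/
def MConvexIndep (G : SimpleGraph V) (S : Set V) : Prop :=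
  ∀ v ∈ S, v ∉ monoHull G (S \ {v})

/-- The monophonic rank: the largest size of an m-convexly independent set. -/
noncomputable def monoRank (G : SimpleGraph V) : ℕ :=
  sSup {n : ℕ | ∃ S : Set V, MConvexIndep G S ∧ n = S.ncard}

/-- A starlike partition of a graph: a partition of the vertex set into cliques
`V_0, V_1, …, V_t` such that `V_0` is a maximal clique and, for `i ≥ 1`,
all vertices of `V_i` have the same closed neighborhood outside `V_i`,
contained in `V_0`. -/
structure IsStarlikePartition (G : SimpleGraph V) (t : ℕ) (Vp : Fin (t+1) → Set V) : Prop where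
  nonempty : ∀ i, (Vp i).Nonempty
  disjoint : ∀ i j, i ≠ j → Disjoint (Vp i) (Vp j)
  covers : ∀ v : V, ∃ i, v ∈ Vp i
  cliques : ∀ i, G.IsClique (Vp i)
  maximal : ∀ T : Set V, G.IsClique T → Vp 0 ⊆ T → T ⊆ Vp 0
  nbhd_eq : ∀ i : Fin (t+1), i ≠ 0 → ∀ u ∈ Vp i, ∀ v ∈ Vp i,
    closedNbhd G u \ Vp i = closedNbhd G v \ Vp i
  nbhd_sub : ∀ i : Fin (t+1), i ≠ 0 → ∀ u ∈ Vp i, closedNbhd G u \ Vp i ⊆ Vp 0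

/-- `X_i`: the maximal clique containing `V_i` (`X_0 = V_0`; for `i ≥ 1` it is
the closed neighborhood of any vertex of `V_i`). -/
def Xset (G : SimpleGraph V) {t : ℕ} (Vp : Fin (t+1) → Set V) (i : Fin (t+1)) : Set V :=
  if i = 0 then Vp 0 else ⋃ u ∈ Vp i, closedNbhd G u

/-- `C_i = X_i ∩ Z`. -/
def Cset (G : SimpleGraph V) {t : ℕ} (Vp : Fin (t+1) → Set V) (i : Fin (t+1)) : Set V :=
  Xset G Vp i ∩ simplicialSet G

/-- `C'_i = X_i − C_i`. -/
def Cset' (G : SimpleGraph V) {t : ℕ} (Vp : Fin (t+1) → Set V) (i : Fin (t+1)) : Set V :=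
  Xset G Vp i \ Cset G Vp i

/-- `Y_i`: the union of the sets `C_j`, over `j ≠ i` with `C'_j ⊆ C'_i`. -/
def Yset (G : SimpleGraph V) {t : ℕ} (Vp : Fin (t+1) → Set V) (i : Fin (t+1)) : Set V :=
  ⋃ j ∈ {j : Fin (t+1) | j ≠ i ∧ Cset' G Vp j ⊆ Cset' G Vp i}, Cset G Vp j

open scoped Classical in
/-- The vertex set of the split graph `G_i`: if `|N(Y_i) − Y_i| = |C'_i| − 1` and
`|Y_i| ≥ |C'_i| − 1` then `(C'_i − {x}) ∪ Y_i` where `{x} = C'_i − N(Y_i)`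
(so that `C'_i − {x} = C'_i ∩ N(Y_i)`), otherwise `C'_i ∪ Y_i`. -/
noncomputable def Wset (G : SimpleGraph V) {t : ℕ} (Vp : Fin (t+1) → Set V)
    (i : Fin (t+1)) : Set V :=
  if (((nbhdSet G (Yset G Vp i) \ Yset G Vp i).ncard : ℤ) = ((Cset' G Vp i).ncard : ℤ) - 1
      ∧ ((Yset G Vp i).ncard : ℤ) ≥ ((Cset' G Vp i).ncard : ℤ) - 1)
  then (Cset' G Vp i ∩ nbhdSet G (Yset G Vp i)) ∪ Yset G Vp i
  else Cset' G Vp i ∪ Yset G Vp i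

/-- The induced subgraph on `W` with all edges inside `Y` deleted. -/
def inducedMinusY (G : SimpleGraph V) (W Y : Set V) : SimpleGraph ↥W where
  Adj a b := G.Adj a b ∧ ¬((a : V) ∈ Y ∧ (b : V) ∈ Y)
  symm := by
    refine ⟨?_⟩
    intro a b h
    exact ⟨h.1.symm, fun hc => h.2 ⟨hc.2, hc.1⟩⟩
  loopless := by
    refine ⟨?_⟩
    intro a h
    exact G.irrefl h.1

/-- The split graph `G_i = G[W_i] − E(G[Y_i])`. -/
noncomputable def Gsplit (G : SimpleGraph V) {t : ℕ} (Vp : Fin (t+1) → Set V)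
    (i : Fin (t+1)) : SimpleGraph ↥(Wset G Vp i) :=
  inducedMinusY G (Wset G Vp i) (Yset G Vp i)

/-! A simplicial vertex is never an inner vertex of an induced path, since its two path neighbours
would be adjacent chords. Hence the complement of a simplicial vertex is monophonically convex, and
the hull of a set avoiding it avoids it too. -/

section

variable {G : SimpleGraph V}

lemma IsInducedPath.not_adj_getVert {a b : V} {p : G.Walk a b} (hp : IsInducedPath G p)
    {i j : ℕ} (hij : i + 1 < j) (hj : j ≤ p.length) :
    ¬ G.Adj (p.getVert i) (p.getVert j) := by
  have hlen := p.length_support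
  simpa only [List.get_eq_getElem, Walk.support_getElem_eq_getVert] using
    hp.2 i j (by omega) (by omega) hij

lemma IsInducedPath.not_isSimplicial_getVert {a b : V} {p : G.Walk a b}
    (hp : IsInducedPath G p) {n : ℕ} (hn : n + 1 < p.length) :
    ¬ IsSimplicial G (p.getVert (n + 1)) := by
  intro hs
  have hprev : G.Adj (p.getVert (n + 1)) (p.getVert n) :=
    (p.adj_getVert_succ (by omega)).symm
  have hnext : G.Adj (p.getVert (n + 1)) (p.getVert (n + 2)) := p.adj_getVert_succ hn
  have hne : p.getVert n ≠ p.getVert (n + 2) := fun h ↦ by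
    have := hp.1.getVert_injOn (by simp only [Set.mem_ofPred_eq]; omega)
      (by simp only [Set.mem_ofPred_eq]; omega) h
    omega
  exact hp.not_adj_getVert (by omega) (by omega)
    (hs _ (Set.mem_insert_of_mem _ hprev) _ (Set.mem_insert_of_mem _ hnext) hne)

lemma IsInducedPath.eq_or_eq_of_isSimplicial {a b w : V} {p : G.Walk a b}
    (hp : IsInducedPath G p) (hw : w ∈ p.support) (hs : IsSimplicial G w) : w = a ∨ w = b := by
  obtain ⟨n, rfl, hn⟩ := Walk.mem_support_iff_exists_getVert.mp hw
  rcases n with _ | n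
  · exact .inl p.getVert_zero
  rcases hn.lt_or_eq with hlt | heq
  · exact absurd hs (hp.not_isSimplicial_getVert hlt)
  · exact .inr (heq ▸ p.getVert_length)

lemma monoConvex_compl_singleton_of_isSimplicial {v : V} (hv : IsSimplicial G v) : MonoConvex G {v}ᶜ := by
  rintro a b ha hb p hp w hw rfl
  rcases hp.eq_or_eq_of_isSimplicial hw hv with rfl | rfl
  exacts [ha rfl, hb rfl]

lemma monoHull_subset {S T : Set V} (hST : S ⊆ T) (hT : MonoConvex G T) : monoHull G S ⊆ T :=
  Set.sInter_subset_of_mem ⟨hST, hT⟩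

end

theorem statement7_general (G : SimpleGraph V) (S : Set V) (v : V)
    (hv : IsSimplicial G v) (hmem : v ∈ monoHull G S) :
    v ∈ S := by
  by_contra hvS
  exact monoHull_subset (Set.subset_compl_singleton_iff.mpr hvS)
    (monoConvex_compl_singleton_of_isSimplicial hv) hmem rfl

/-- every simplicial vertex belonging to the monophonic convex hull
of `S` belongs to `S`. -/
theorem statement7 [Fintype V] (G : SimpleGraph V) (S : Set V) (v : V)
    (hv : IsSimplicial G v) (hmem : v ∈ monoHull G S) :
    v ∈ S :=
  statement7_general G S v hv hmem
end

section
/- Every induced path in a starlike graph has at most 4 vertices. -/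
open SimpleGraph

variable {V : Type*}

/-! The middle vertex `y` of every induced path `x y z` lies in `V_0`. Indeed `x` and `z` are
not both in the clique `V_0`; say `x ∈ V_i` with `i ≠ 0`. Then `y ∉ V_i`, since otherwise `z`
would be adjacent to `x`, either inside the clique `V_i` or because all vertices of `V_i` share
their neighbours outside `V_i`; and the neighbours of `x` outside `V_i` lie in `V_0`. On an
induced path with five vertices the second and fourth vertices would thus be two non-adjacent
vertices of the clique `V_0`. -/

namespace IsStarlikePartition

variable {G : SimpleGraph V} {t : ℕ} {Vp : Fin (t+1) → Set V}

lemma mem_zero_of_adj (h : IsStarlikePartition G t Vp) {i : Fin (t+1)} (hi : i ≠ 0) {u w : V}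
    (hu : u ∈ Vp i) (hw : w ∉ Vp i) (huw : G.Adj u w) : w ∈ Vp 0 :=
  h.nbhd_sub i hi u hu ⟨Set.mem_insert_of_mem _ huw, hw⟩

lemma adj_of_adj (h : IsStarlikePartition G t Vp) {i : Fin (t+1)} (hi : i ≠ 0) {u u' w : V}
    (hu : u ∈ Vp i) (hu' : u' ∈ Vp i) (hw : w ∉ Vp i) (huw : G.Adj u w) : G.Adj u' w := by
  have hw' : w ∈ closedNbhd G u' \ Vp i :=
    h.nbhd_eq i hi u hu u' hu' ▸ ⟨Set.mem_insert_of_mem _ huw, hw⟩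
  rcases hw'.1 with rfl | hadj
  · exact absurd hu' hw
  · exact hadj

lemma mem_zero_of_adj_of_adj_of_notMem_zero (h : IsStarlikePartition G t Vp) {x y z : V}
    (hx : x ∉ Vp 0) (hxy : G.Adj x y) (hyz : G.Adj y z) (hxz : ¬G.Adj x z) (hne : x ≠ z) :
    y ∈ Vp 0 := by
  obtain ⟨i, hxi⟩ := h.covers x
  have hi : i ≠ 0 := by rintro rfl; exact hx hxi
  by_cases hyi : y ∈ Vp i
  · by_cases hzi : z ∈ Vp i
    · exact absurd (h.cliques i hxi hzi hne) hxz
    · exact absurd (h.adj_of_adj hi hyi hxi hzi hyz) hxz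
  · exact h.mem_zero_of_adj hi hxi hyi hxy

lemma mem_zero_of_adj_of_adj (h : IsStarlikePartition G t Vp) {x y z : V}
    (hxy : G.Adj x y) (hyz : G.Adj y z) (hxz : ¬G.Adj x z) (hne : x ≠ z) : y ∈ Vp 0 := by
  by_cases hx : x ∈ Vp 0
  · by_cases hz : z ∈ Vp 0
    · exact absurd (h.cliques 0 hx hz hne) hxz
    · exact h.mem_zero_of_adj_of_adj_of_notMem_zero hz hyz.symm hxy.symm
        (fun hzx => hxz hzx.symm) hne.symm
  · exact h.mem_zero_of_adj_of_adj_of_notMem_zero hx hxy hyz hxz hne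

end IsStarlikePartition

namespace IsInducedPath

variable {G : SimpleGraph V} {a b : V} {p : G.Walk a b}

lemma not_adj_getVert_s9 (hp : IsInducedPath G p) {i j : ℕ} (hij : i + 1 < j) (hj : j ≤ p.length) :
    ¬G.Adj (p.getVert i) (p.getVert j) := by
  have hlen := p.length_support
  simpa [Walk.support_getElem_eq_getVert] using hp.2 i j (by omega) (by omega) hij

lemma getVert_ne (hp : IsInducedPath G p) {i j : ℕ} (hij : i < j) (hj : j ≤ p.length) :
    p.getVert i ≠ p.getVert j := fun heq =>
  hij.ne (hp.1.getVert_injOn (by simp only [Set.mem_ofPred_eq]; omega) hj heq)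

lemma getVert_succ_mem_zero (hp : IsInducedPath G p) {t : ℕ} {Vp : Fin (t+1) → Set V}
    (hstar : IsStarlikePartition G t Vp) {k : ℕ} (hk : k + 2 ≤ p.length) :
    p.getVert (k + 1) ∈ Vp 0 :=
  hstar.mem_zero_of_adj_of_adj (p.adj_getVert_succ (by omega)) (p.adj_getVert_succ (by omega))
    (hp.not_adj_getVert_s9 (by omega) hk) (hp.getVert_ne (by omega) hk)

end IsInducedPath

theorem statement9_general (G : SimpleGraph V) (t : ℕ) (Vp : Fin (t+1) → Set V)
    (hstar : IsStarlikePartition G t Vp)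
    {a b : V} (p : G.Walk a b) (hp : IsInducedPath G p) :
    p.support.length ≤ 4 := by
  by_contra! hlen
  have hp4 : 4 ≤ p.length := by rw [Walk.length_support] at hlen; omega
  have h1 := hp.getVert_succ_mem_zero hstar (k := 0) (by omega)
  have h3 := hp.getVert_succ_mem_zero hstar (k := 2) hp4
  exact hp.not_adj_getVert_s9 (i := 1) (j := 3) (by omega) (by omega)
    (hstar.cliques 0 h1 h3 (hp.getVert_ne (by omega) (by omega)))

/-- every induced path in a starlike graph has at most 4 vertices. -/
theorem statement9 [Fintype V] (G : SimpleGraph V) (t : ℕ) (Vp : Fin (t+1) → Set V)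
    (hstar : IsStarlikePartition G t Vp)
    {a b : V} (p : G.Walk a b) (hp : IsInducedPath G p) :
    p.support.length ≤ 4 :=
  statement9_general G t Vp hstar p hp
end
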